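/- Let W be an n×n row-stochastic matrix whose directed graph is strongly connected, let u ≠ v be indices with W_{vu} > 0 (a directed edge from u to v), and let ℓ ≥ 1 be an integer (the delay on this edge). Define the (n+ℓ)×(n+ℓ) matrix 𝒲 as follows: 𝒲_{ij} = W_{ij} for all i, j ≤ n with (i, j) ≠ (v, u); 𝒲_{vu} = 0; 𝒲_{(n+1), u} = 1; 𝒲_{(n+j+1), (n+j)} = 1 for j = 1, …, ℓ−1; 𝒲_{v, (n+ℓ)} = W_{vu}; and all remaining entries of 𝒲 are 0. Then 𝒲 is row-stochastic and its directed graph is strongly connected. -/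
import Mathlib


/-- A square real matrix indexed by a fintype is row-stochastic if all its entries are
nonnegative and every row sums to one. -/
def RowStochastic {ι : Type*} [Fintype ι] (W : Matrix ι ι ℝ) : Prop :=
  (∀ i j, 0 ≤ W i j) ∧ ∀ i, ∑ j, W i j = 1

/-- The directed graph of `W` has an edge from node `m` to node `n` iff `W n m > 0`.
`W` is strongly connected if every node can reach every other node through directed edges. -/
def StronglyConnected {ι : Type*} [Fintype ι] (W : Matrix ι ι ℝ) : Prop :=
  ∀ m n : ι, Relation.ReflTransGen (fun a b => 0 < W b a) m n

/-- The extension of `W` replacing the delayed edge from `u` to `v` by a directed path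
through `ℓ` virtual relay nodes `Sum.inr 0 → Sum.inr 1 → ⋯ → Sum.inr (ℓ-1) → v`: the
entry `𝒲_{vu}` is set to `0`, the first relay receives from `u` with weight `1`, each
subsequent relay receives from the previous one with weight `1`, and `v` receives from
the last relay with the original weight `W v u`. -/
def extendedWithDelay {n : ℕ} (W : Matrix (Fin n) (Fin n) ℝ) (u v : Fin n) (ℓ : ℕ) :
    Matrix (Fin n ⊕ Fin ℓ) (Fin n ⊕ Fin ℓ) ℝ :=
  fun i j =>
    match i, j with
    | Sum.inl a, Sum.inl b => if a = v ∧ b = u then 0 else W a b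
    | Sum.inr r, Sum.inl b => if (r : ℕ) = 0 ∧ b = u then 1 else 0
    | Sum.inr r, Sum.inr s => if (r : ℕ) = (s : ℕ) + 1 then 1 else 0
    | Sum.inl a, Sum.inr s => if a = v ∧ (s : ℕ) = ℓ - 1 then W v u else 0

/-- if `W` is row-stochastic with strongly connected directed graph,
`u ≠ v`, `W v u > 0` and `ℓ ≥ 1`, then the extended matrix obtained by replacing the
edge `u → v` with a path through `ℓ` virtual relay nodes is again row-stochastic with a
strongly connected directed graph. -/
theorem extendedWithDelay_rowStochastic_stronglyConnected {n : ℕ}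
    (W : Matrix (Fin n) (Fin n) ℝ)
    (hrs : RowStochastic W) (hsc : StronglyConnected W)
    (u v : Fin n) (huv : u ≠ v) (hedge : 0 < W v u)
    (ℓ : ℕ) (hℓ : 1 ≤ ℓ) :
    RowStochastic (extendedWithDelay W u v ℓ) ∧
      StronglyConnected (extendedWithDelay W u v ℓ) := by
  obtain ⟨hnn, hrow⟩ := hrs
  set E := extendedWithDelay W u v ℓ with hEdef
  have h0ℓ : 0 < ℓ := hℓ
  -- entry lemmas
  have hll : ∀ a b : Fin n, E (Sum.inl a) (Sum.inl b) =
      if a = v ∧ b = u then 0 else W a b := fun a b => rfl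
  have hrl : ∀ (r : Fin ℓ) (b : Fin n), E (Sum.inr r) (Sum.inl b) =
      if (r : ℕ) = 0 ∧ b = u then 1 else 0 := fun r b => rfl
  have hrr : ∀ (r s : Fin ℓ), E (Sum.inr r) (Sum.inr s) =
      if (r : ℕ) = (s : ℕ) + 1 then 1 else 0 := fun r s => rfl
  have hlr : ∀ (a : Fin n) (s : Fin ℓ), E (Sum.inl a) (Sum.inr s) =
      if a = v ∧ (s : ℕ) = ℓ - 1 then W v u else 0 := fun a s => rfl
  constructor
  · constructor
    · rintro (a | r) (b | s)
      · rw [hll]; split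
        · exact le_refl 0
        · exact hnn a b
      · rw [hlr]; split
        · exact hedge.le
        · exact le_refl 0
      · rw [hrl]; split
        · exact zero_le_one
        · exact le_refl 0
      · rw [hrr]; split
        · exact zero_le_one
        · exact le_refl 0
    · rintro (a | r)
      · rw [Fintype.sum_sum_type]
        by_cases ha : a = v
        · have h1 : ∑ b : Fin n, E (Sum.inl a) (Sum.inl b) = 1 - W a u := by
            have key : ∀ b : Fin n, E (Sum.inl a) (Sum.inl b)
                = W a b - (if b = u then W a u else 0) := by
              intro b; rw [hll]; by_cases hb : b = u <;> simp [hb, ha]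
            rw [Finset.sum_congr rfl (fun b _ => key b), Finset.sum_sub_distrib,
              hrow a, Finset.sum_ite_eq' Finset.univ u (fun _ => W a u)]
            simp
          have h2 : ∑ s : Fin ℓ, E (Sum.inl a) (Sum.inr s) = W v u := by
            have key : ∀ s : Fin ℓ, E (Sum.inl a) (Sum.inr s)
                = if s = ⟨ℓ - 1, Nat.sub_lt h0ℓ one_pos⟩ then W v u else 0 := by
              intro s; rw [hlr]
              simp [Fin.ext_iff, ha]
            rw [Finset.sum_congr rfl (fun s _ => key s),
              Finset.sum_ite_eq' Finset.univ _ (fun _ => W v u)]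
            simp
          rw [h1, h2, ha]; ring
        · have h1 : ∑ b : Fin n, E (Sum.inl a) (Sum.inl b) = 1 := by
            have : ∀ b : Fin n, E (Sum.inl a) (Sum.inl b) = W a b := by
              intro b; rw [hll]; simp [ha]
            rw [Finset.sum_congr rfl (fun b _ => this b), hrow a]
          have h2 : ∑ s : Fin ℓ, E (Sum.inl a) (Sum.inr s) = 0 := by
            apply Finset.sum_eq_zero; intro s _; rw [hlr]; simp [ha]
          rw [h1, h2]; ring
      · rw [Fintype.sum_sum_type]
        by_cases hr : (r : ℕ) = 0
        · have h1 : ∑ b : Fin n, E (Sum.inr r) (Sum.inl b) = 1 := by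
            have : ∀ b : Fin n, E (Sum.inr r) (Sum.inl b)
                = if b = u then 1 else 0 := by
              intro b; rw [hrl]; simp [hr]
            rw [Finset.sum_congr rfl (fun b _ => this b),
              Finset.sum_ite_eq' Finset.univ u (fun _ => (1:ℝ))]
            simp
          have h2 : ∑ s : Fin ℓ, E (Sum.inr r) (Sum.inr s) = 0 := by
            apply Finset.sum_eq_zero; intro s _; rw [hrr]; simp [hr]
          rw [h1, h2]; ring
        · have hrpos : 0 < (r : ℕ) := Nat.pos_of_ne_zero hr
          have h1 : ∑ b : Fin n, E (Sum.inr r) (Sum.inl b) = 0 := by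
            apply Finset.sum_eq_zero; intro b _; rw [hrl]; simp [hr]
          have h2 : ∑ s : Fin ℓ, E (Sum.inr r) (Sum.inr s) = 1 := by
            have hlt : (r : ℕ) - 1 < ℓ := lt_of_le_of_lt (Nat.sub_le _ _) r.isLt
            have key : ∀ s : Fin ℓ, E (Sum.inr r) (Sum.inr s)
                = if s = ⟨(r : ℕ) - 1, hlt⟩ then 1 else 0 := by
              intro s; rw [hrr]
              have hiff : ((r : ℕ) = (s : ℕ) + 1) ↔ s = ⟨(r : ℕ) - 1, hlt⟩ := by
                rw [Fin.ext_iff]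
                simp only [Fin.val_mk]
                constructor <;> intro h <;> omega
              rw [if_congr hiff rfl rfl]
            rw [Finset.sum_congr rfl (fun s _ => key s),
              Finset.sum_ite_eq' Finset.univ _ (fun _ => (1:ℝ))]
            simp
          rw [h1, h2]; ring
  · -- strong connectivity
    set R : (Fin n ⊕ Fin ℓ) → (Fin n ⊕ Fin ℓ) → Prop := fun a b => 0 < E b a with hR
    have step_u0 : R (Sum.inl u) (Sum.inr ⟨0, h0ℓ⟩) := by
      show (0:ℝ) < E (Sum.inr ⟨0, h0ℓ⟩) (Sum.inl u)
      rw [hrl]; simp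
    have step_relay : ∀ (k : ℕ) (hk : k + 1 < ℓ),
        R (Sum.inr ⟨k, Nat.lt_of_succ_lt hk⟩) (Sum.inr ⟨k + 1, hk⟩) := by
      intro k hk
      show (0:ℝ) < E (Sum.inr ⟨k+1, hk⟩) (Sum.inr ⟨k, _⟩)
      rw [hrr]; simp
    have step_last : R (Sum.inr ⟨ℓ - 1, Nat.sub_lt h0ℓ one_pos⟩) (Sum.inl v) := by
      show (0:ℝ) < E (Sum.inl v) (Sum.inr ⟨ℓ - 1, _⟩)
      rw [hlr]; simpa using hedge
    -- from u to any relay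
    have hB : ∀ (k : ℕ) (hk : k < ℓ),
        Relation.ReflTransGen R (Sum.inl u) (Sum.inr ⟨k, hk⟩) := by
      intro k
      induction k with
      | zero => intro hk; exact Relation.ReflTransGen.single step_u0
      | succ k ih => intro hk
                     exact (ih (Nat.lt_of_succ_lt hk)).tail (step_relay k hk)
    -- from any relay to v
    have hC : ∀ (k : ℕ) (hk : k < ℓ),
        Relation.ReflTransGen R (Sum.inr ⟨k, hk⟩) (Sum.inl v) := by
      intro k hk
      have : ∀ d k (hk : k < ℓ), ℓ - 1 - k ≤ d →
          Relation.ReflTransGen R (Sum.inr ⟨k, hk⟩) (Sum.inl v) := by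
        intro d
        induction d with
        | zero =>
          intro k hk hd
          have : k = ℓ - 1 := by omega
          subst this
          exact Relation.ReflTransGen.single step_last
        | succ d ih =>
          intro k hk hd
          by_cases hke : k = ℓ - 1
          · subst hke; exact Relation.ReflTransGen.single step_last
          · have hk1 : k + 1 < ℓ := by omega
            exact Relation.ReflTransGen.head (step_relay k hk1)
              (ih (k+1) hk1 (by omega))
      exact this (ℓ - 1 - k) k hk le_rfl
    -- u to v through relays
    have hA : Relation.ReflTransGen R (Sum.inl u) (Sum.inl v) :=
      Relation.ReflTransGen.head step_u0 (hC 0 h0ℓ)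
    -- lift paths in W
    have hD : ∀ a b : Fin n, Relation.ReflTransGen R (Sum.inl a) (Sum.inl b) := by
      intro a b
      induction hsc a b with
      | refl => exact Relation.ReflTransGen.refl
      | tail hpath hstep ih =>
        rename_i b' c
        by_cases hc : c = v ∧ b' = u
        · obtain ⟨hc1, hc2⟩ := hc; subst hc1; subst hc2
          exact ih.trans hA
        · refine ih.tail ?_
          show (0:ℝ) < E (Sum.inl c) (Sum.inl b')
          rw [hll, if_neg hc]
          exact hstep
    rintro (a | r) (b | s)
    · exact hD a b
    · exact (hD a u).trans (hB s s.isLt)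
    · exact (hC r r.isLt).trans (hD v b)
    · exact ((hC r r.isLt).trans (hD v u)).trans (hB s s.isLt)
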